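/- Let d = 4 and let u, v ∈ S³ be linearly independent unit vectors, β = ∠(u,v), L = u^⊥ ∩ v^⊥ ∈ G(4,2). Let U ⊂ u^⊥ and V ⊂ v^⊥ be one-dimensional subspaces spanned by unit vectors u₁ and v₁ respectively, with α_U = ∠(U, L), α_V = ∠(V, L), and γ the angle between the projections of U and V onto L (when defined). Then ‖u₁ ∧ u ∧ v₁ ∧ v‖² = sin²β · cos²α_U · cos²α_V · sin²γ. -/

import Mathlib

/-!
Let `p, q` be the projections of `u₁, v₁` onto `L`. Since `u₁ - p` and `v₁ - q` lie in
`Lᗮ = span {u, v}`, the family `(u₁, u, v₁, v)` is a unimodular recombination of `(p, u, q, v)`,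
so both have the same Gram determinant; as `p, q ⟂ u, v` it splits as `Gram(p, q) · Gram(u, v)`.
A `2 × 2` Gram determinant is `‖x‖² ‖y‖² sin² ∠(x, y)`, and `‖p‖ = cos α_U`, `‖q‖ = cos α_V`
because `u₁, v₁` are unit vectors.
-/

open scoped RealInnerProductSpace
open InnerProductGeometry

/-- The Gram-determinant squared norm `‖c₁ ∧ c₂ ∧ c₃ ∧ c₄‖² = det((⟨c_i, c_j⟩))`. -/
noncomputable def wedgeNormSq4 (c : Fin 4 → EuclideanSpace ℝ (Fin 4)) : ℝ :=
  Matrix.det (Matrix.of fun i j => ⟪c i, c j⟫)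

section
variable {E : Type*} [NormedAddCommGroup E] [InnerProductSpace ℝ E]

namespace Matrix

theorem gram_sum_smul {m n : Type*} [Fintype n] (M : Matrix m n ℝ) (v : n → E) :
    gram ℝ (fun i ↦ ∑ j, M i j • v j) = M * gram ℝ v * Mᵀ := by
  ext i k
  simp only [gram_apply, sum_inner, inner_sum, real_inner_smul_left, real_inner_smul_right,
    mul_apply, transpose_apply, Finset.sum_mul]
  exact Finset.sum_congr rfl fun _ _ ↦ Finset.sum_congr rfl fun _ _ ↦ by ring

theorem det_gram_add_mem_span_pair {x₁ x₂ y₁ y₂ a b : E} (ha : a ∈ Submodule.span ℝ {y₁, y₂})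
    (hb : b ∈ Submodule.span ℝ {y₁, y₂}) :
    (gram ℝ ![x₁ + a, y₁, x₂ + b, y₂]).det = (gram ℝ ![x₁, y₁, x₂, y₂]).det := by
  obtain ⟨α, β, rfl⟩ := Submodule.mem_span_pair.1 ha
  obtain ⟨γ, δ, rfl⟩ := Submodule.mem_span_pair.1 hb
  let M : Matrix (Fin 4) (Fin 4) ℝ := !![1, α, 0, β; 0, 1, 0, 0; 0, γ, 1, δ; 0, 0, 0, 1]
  have hfamily : ![x₁ + (α • y₁ + β • y₂), y₁, x₂ + (γ • y₁ + δ • y₂), y₂] =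
      fun i ↦ ∑ j, M i j • ![x₁, y₁, x₂, y₂] j := by
    ext1 i; fin_cases i <;> simp [M, Fin.sum_univ_four] <;> abel
  have hM : M.det = 1 := by simp [M, det_succ_row_zero, Fin.sum_univ_succ]
  rw [hfamily, gram_sum_smul, det_mul, det_mul, det_transpose, hM, one_mul, mul_one]

theorem det_gram_of_inner_eq_zero {x₁ x₂ y₁ y₂ : E} (h₁₁ : ⟪x₁, y₁⟫ = 0) (h₁₂ : ⟪x₁, y₂⟫ = 0)
    (h₂₁ : ⟪x₂, y₁⟫ = 0) (h₂₂ : ⟪x₂, y₂⟫ = 0) :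
    (gram ℝ ![x₁, y₁, x₂, y₂]).det = (gram ℝ ![x₁, x₂]).det * (gram ℝ ![y₁, y₂]).det := by
  rw [real_inner_comm] at h₁₁ h₁₂ h₂₁ h₂₂
  simp [det_succ_row_zero, Fin.sum_univ_succ, gram_apply, Fin.succAbove, h₁₁, h₁₂, h₂₁, h₂₂,
    real_inner_comm x₁ x₂, real_inner_comm y₁ y₂]
  ring

theorem det_gram_pair (x y : E) :
    (gram ℝ ![x, y]).det = ‖x‖ ^ 2 * ‖y‖ ^ 2 * Real.sin (angle x y) ^ 2 := by
  have hcs : 0 ≤ ⟪x, x⟫ * ⟪y, y⟫ - ⟪x, y⟫ * ⟪x, y⟫ := by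
    nlinarith [real_inner_mul_inner_self_le x y]
  have hsin := congrArg (· ^ 2) (sin_angle_mul_norm_mul_norm x y)
  rw [Real.sq_sqrt hcs, real_inner_self_eq_norm_sq, real_inner_self_eq_norm_sq] at hsin
  simp [det_fin_two, gram_apply, real_inner_comm x]
  linear_combination -hsin

end Matrix

namespace Submodule

theorem inner_starProjection_self (K : Submodule ℝ E) [K.HasOrthogonalProjection] (x : E) :
    ⟪x, K.starProjection x⟫ = ‖K.starProjection x‖ * ‖K.starProjection x‖ := by
  have := K.starProjection_inner_eq_zero x _ (K.starProjection_apply_mem x)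
  rw [inner_sub_left, real_inner_self_eq_norm_mul_norm] at this
  linarith

theorem cos_angle_starProjection_mul_norm (K : Submodule ℝ E) [K.HasOrthogonalProjection]
    (x : E) : Real.cos (angle x (K.starProjection x)) * ‖x‖ = ‖K.starProjection x‖ := by
  rcases eq_or_ne (K.starProjection x) 0 with h | h
  · simp [h]
  refine mul_right_cancel₀ (norm_ne_zero_iff.mpr h) ?_
  rw [mul_assoc, cos_angle_mul_norm_mul_norm, inner_starProjection_self]

theorem orthogonal_inf_orthogonal_span_singleton (u v : E) :
    ((span ℝ {u})ᗮ ⊓ (span ℝ {v})ᗮ)ᗮ = span ℝ {u, v} := by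
  rw [inf_orthogonal, orthogonal_orthogonal, span_insert]

end Submodule

end

theorem wedge_normSq_angles_general (u v u₁ v₁ : EuclideanSpace ℝ (Fin 4))
    (hu : ‖u‖ = 1) (hv : ‖v‖ = 1)
    (hu₁ : ‖u₁‖ = 1) (hv₁ : ‖v₁‖ = 1)
    (L : Submodule ℝ (EuclideanSpace ℝ (Fin 4)))
    (hL : L = (Submodule.span ℝ {u})ᗮ ⊓ (Submodule.span ℝ {v})ᗮ) :
    wedgeNormSq4 ![u₁, u, v₁, v] =
      Real.sin (angle u v) ^ 2 *
        Real.cos (angle u₁ ((L.orthogonalProjectionOnto u₁ : L) : EuclideanSpace ℝ (Fin 4))) ^ 2 *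
        Real.cos (angle v₁ ((L.orthogonalProjectionOnto v₁ : L) : EuclideanSpace ℝ (Fin 4))) ^ 2 *
        Real.sin (angle ((L.orthogonalProjectionOnto u₁ : L) : EuclideanSpace ℝ (Fin 4))
          ((L.orthogonalProjectionOnto v₁ : L) : EuclideanSpace ℝ (Fin 4))) ^ 2 := by
  simp only [Submodule.coe_orthogonalProjectionOnto_apply]
  set p := L.starProjection u₁
  set q := L.starProjection v₁
  have hspan : Lᗮ = Submodule.span ℝ {u, v} :=
    hL ▸ Submodule.orthogonal_inf_orthogonal_span_singleton u v
  have hperp : ∀ w ∈ L, ⟪w, u⟫ = 0 ∧ ⟪w, v⟫ = 0 := fun w hw ↦ by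
    rwa [hL, Submodule.mem_inf, Submodule.mem_orthogonal_singleton_iff_inner_left,
      Submodule.mem_orthogonal_singleton_iff_inner_left] at hw
  obtain ⟨hpu, hpv⟩ := hperp p (L.starProjection_apply_mem u₁)
  obtain ⟨hqu, hqv⟩ := hperp q (L.starProjection_apply_mem v₁)
  calc wedgeNormSq4 ![u₁, u, v₁, v]
      = (Matrix.gram ℝ ![p + (u₁ - p), u, q + (v₁ - q), v]).det := by
        simp [wedgeNormSq4, Matrix.gram]
    _ = (Matrix.gram ℝ ![p, q]).det * (Matrix.gram ℝ ![u, v]).det := by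
      rw [Matrix.det_gram_add_mem_span_pair (hspan ▸ L.sub_starProjection_mem_orthogonal u₁)
        (hspan ▸ L.sub_starProjection_mem_orthogonal v₁),
        Matrix.det_gram_of_inner_eq_zero hpu hpv hqu hqv]
    _ = _ := by
      rw [Matrix.det_gram_pair, Matrix.det_gram_pair,
        ← L.cos_angle_starProjection_mul_norm u₁, ← L.cos_angle_starProjection_mul_norm v₁,
        hu, hv, hu₁, hv₁]
      ring

/-- In `ℝ⁴`: let `u, v` be linearly independent unit vectors, `β = ∠(u,v)`,
`L = u^⊥ ∩ v^⊥`, and let `U = Lin{u₁} ⊂ u^⊥`, `V = Lin{v₁} ⊂ v^⊥` be lines spanned by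
unit vectors, with `α_U = ∠(u₁, u₁|L)`, `α_V = ∠(v₁, v₁|L)` (the angles to `L`, equal to
`π/2` in the degenerate cases) and `γ = ∠(u₁|L, v₁|L)` the angle between the projections
onto `L`.  Then `‖u₁ ∧ u ∧ v₁ ∧ v‖² = sin²β · cos²α_U · cos²α_V · sin²γ`. -/
theorem wedge_normSq_angles (u v u₁ v₁ : EuclideanSpace ℝ (Fin 4))
    (hu : ‖u‖ = 1) (hv : ‖v‖ = 1) (huv : LinearIndependent ℝ ![u, v])
    (hu₁ : ‖u₁‖ = 1) (hv₁ : ‖v₁‖ = 1) (hu₁u : ⟪u₁, u⟫ = 0) (hv₁v : ⟪v₁, v⟫ = 0)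
    (L : Submodule ℝ (EuclideanSpace ℝ (Fin 4)))
    (hL : L = (Submodule.span ℝ {u})ᗮ ⊓ (Submodule.span ℝ {v})ᗮ) :
    wedgeNormSq4 ![u₁, u, v₁, v] =
      Real.sin (angle u v) ^ 2 *
        Real.cos (angle u₁ ((L.orthogonalProjectionOnto u₁ : L) : EuclideanSpace ℝ (Fin 4))) ^ 2 *
        Real.cos (angle v₁ ((L.orthogonalProjectionOnto v₁ : L) : EuclideanSpace ℝ (Fin 4))) ^ 2 *
        Real.sin (angle ((L.orthogonalProjectionOnto u₁ : L) : EuclideanSpace ℝ (Fin 4))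
          ((L.orthogonalProjectionOnto v₁ : L) : EuclideanSpace ℝ (Fin 4))) ^ 2 :=
  wedge_normSq_angles_general u v u₁ v₁ hu hv hu₁ hv₁ L hL
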